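/- arXiv:2007.13277 — 2 statements merged into one kernel-verified Lean document; each statement's English description precedes it below -/
import Mathlib

section
/- The refined Alexander polynomial of $T(2,7)$, namely $\Delta(x,t) = -t^3 x^3 - \frac{1}{t^3 x^3} + \frac{1}{t^3 x^2} + t x^2 - t x - \frac{1}{t x} + \frac{1}{t}$, satisfies the deformed Weyl symmetry $\Delta(1/x,t) = \Delta(x/t^2, t)$ as an identity of rational functions in $x$ and $t$. -/
/-- The refined Alexander polynomial of `T(2,7)`,
`Δ(x,t) = -t³x³ - 1/(t³x³) + 1/(t³x²) + tx² - tx - 1/(tx) + 1/t`, satisfies the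
deformed Weyl symmetry `Δ(1/x,t) = Δ(x/t²,t)`. -/
theorem refined_alexander_T27_weyl_symmetry
    (Δ : ℂ → ℂ → ℂ)
    (hΔ : ∀ x t : ℂ, Δ x t =
      -(t^3*x^3) - 1/(t^3*x^3) + 1/(t^3*x^2) + t*x^2 - t*x - 1/(t*x) + 1/t) :
    ∀ x t : ℂ, x ≠ 0 → t ≠ 0 → Δ (1/x) t = Δ (x/t^2) t := by
  intro x t hx ht
  have hs : t * t⁻¹ = 1 := mul_inv_cancel₀ ht
  rw [hΔ, hΔ]
  simp only [one_div, div_eq_mul_inv, mul_inv, inv_pow, inv_inv, mul_pow]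
  linear_combination (t*x⁻¹ - t*x⁻¹^2 - t^2*x⁻¹^2*t⁻¹ - t^3*x⁻¹^2*t⁻¹^2
    + t^3*x⁻¹^3 + t^4*x⁻¹^3*t⁻¹ + t^5*x⁻¹^3*t⁻¹^2 + x*t⁻¹ - x^2*t⁻¹^3
    + x^3*t⁻¹^3 + x^3*t*t⁻¹^4 + x^3*t^2*t⁻¹^5) * hs
end

section
/- Let $\zeta_3 = e^{2\pi i/3}$ and let $Q(x,t)$ be the deformed ADO$_3$ polynomial of $T(2,7)$ defined by $Q(x,t) = (tx)^6 + \frac{\zeta_3^{-1}}{t}(tx)^5 + \left(\frac{\zeta_3}{t^2}-\zeta_3^{-1}\right)(tx)^4 - \frac{\zeta_3}{t}(tx)^3 - \frac{1}{t^2}(tx)^2 + 1 - \frac{\zeta_3^{-1}}{t^2}\frac{1}{(tx)^2} - \frac{\zeta_3}{t}\frac{1}{(tx)^3} + \left(\frac{\zeta_3^{-1}}{t^2}-1\right)\frac{1}{(tx)^4} + \frac{\zeta_3}{t}\frac{1}{(tx)^5} + \frac{1}{(tx)^6}$. Then $Q$ satisfies the $t$-deformed Weyl symmetry $Q(1/x,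 t) = Q(\zeta_3^{-2} t^{-2} x, t)$ as an identity of rational functions. -/
/-!
Writing `u = t x`, the polynomial is a Laurent polynomial `P(u)` and the two arguments of the
Weyl symmetry become `u = t / x` and `ζ / u` (using `ζ⁻² = ζ`). The monomials of `P` pair up as
`a uᵏ + b u⁻ᵏ` with `b = a ζᵏ` (checked with `ζ³ = 1`), and each such pair is invariant under
`u ↦ ζ / u`.
-/

variable {K : Type*} [Field K]

def weylPair (a b : K) (k : ℕ) (u : K) : K := a * u ^ k + b / u ^ k

theorem weylPair_div {ζ a b : K} {k : ℕ} (hζ : ζ ≠ 0) (hab : b = a * ζ ^ k) (u : K) :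
    weylPair a b k (ζ / u) = weylPair a b k u := by
  have hζk : ζ ^ k * ζ⁻¹ ^ k = 1 := by rw [← mul_pow, mul_inv_cancel₀ hζ, one_pow]
  simp only [weylPair, hab, div_pow, div_div_eq_mul_div, mul_div_assoc]
  linear_combination a * u ^ k * hζk

/-- The deformed `ADO₃` polynomial of `T(2,7)` in the variable `u = t x`. -/
def ado3T27 (ζ t u : K) : K :=
  u^6 + ζ⁻¹/t*u^5 + (ζ/t^2 - ζ⁻¹)*u^4 - ζ/t*u^3
    - 1/t^2*u^2 + 1 - ζ⁻¹/t^2*(1/u^2) - ζ/t*(1/u^3)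
    + (ζ⁻¹/t^2 - 1)*(1/u^4) + ζ/t*(1/u^5) + 1/u^6

theorem ado3T27_eq_weylPair_sum (ζ t u : K) :
    ado3T27 ζ t u = 1 + weylPair (-1/t^2) (-ζ⁻¹/t^2) 2 u + weylPair (-ζ/t) (-ζ/t) 3 u
      + weylPair (ζ/t^2 - ζ⁻¹) (ζ⁻¹/t^2 - 1) 4 u + weylPair (ζ⁻¹/t) (ζ/t) 5 u
      + weylPair 1 1 6 u := by
  simp only [ado3T27, weylPair]
  ring

theorem inv_eq_sq_of_pow_three_eq_one {ζ : K} (h : ζ ^ 3 = 1) : ζ⁻¹ = ζ ^ 2 :=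
  (eq_inv_of_mul_eq_one_left (by rw [← pow_succ, h])).symm

theorem ado3T27_div {ζ : K} (h : ζ ^ 3 = 1) (t u : K) :
    ado3T27 ζ t (ζ / u) = ado3T27 ζ t u := by
  have hζ : ζ ≠ 0 := by rintro rfl; simp at h
  simp only [ado3T27_eq_weylPair_sum, inv_eq_sq_of_pow_three_eq_one h]
  rw [weylPair_div hζ (by ring), weylPair_div hζ (by linear_combination ζ / t * h),
    weylPair_div hζ (by linear_combination (ζ ^ 3 + 1 - ζ ^ 2 / t ^ 2) * h),
    weylPair_div hζ (by linear_combination -(ζ / t) * (ζ ^ 3 + 1) * h),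
    weylPair_div hζ (by linear_combination -(ζ ^ 3 + 1) * h)]

open Complex in
/-- The `t`-deformed `ADO₃` polynomial `Q(x,t)` of `T(2,7)` satisfies the
`t`-deformed Weyl symmetry `Q(1/x,t) = Q(ζ₃⁻²t⁻²x, t)`. -/
theorem deformed_ADO3_T27_weyl_symmetry
    (ζ : ℂ) (hζ : ζ = Complex.exp (2 * Real.pi * I / 3))
    (Q : ℂ → ℂ → ℂ)
    (hQ : ∀ x t : ℂ, Q x t =
      (t*x)^6 + ζ⁻¹/t*(t*x)^5 + (ζ/t^2 - ζ⁻¹)*(t*x)^4 - ζ/t*(t*x)^3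
        - 1/t^2*(t*x)^2 + 1 - ζ⁻¹/t^2*(1/(t*x)^2) - ζ/t*(1/(t*x)^3)
        + (ζ⁻¹/t^2 - 1)*(1/(t*x)^4) + ζ/t*(1/(t*x)^5) + 1/(t*x)^6) :
    ∀ x t : ℂ, x ≠ 0 → t ≠ 0 → Q (1/x) t = Q ((ζ^2)⁻¹ * (t^2)⁻¹ * x) t := by
  have h3 : ζ ^ 3 = 1 := by
    rw [hζ]
    exact_mod_cast (isPrimitiveRoot_exp 3 (by norm_num)).pow_eq_one
  have hQ' : ∀ x t, Q x t = ado3T27 ζ t (t * x) := hQ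
  intro x t _ _
  have harg : t * ((ζ ^ 2)⁻¹ * (t ^ 2)⁻¹ * x) = ζ / (t * (1 / x)) := by
    rw [← inv_eq_sq_of_pow_three_eq_one h3, inv_inv]
    field_simp
  rw [hQ', hQ', harg, ado3T27_div h3]
end
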